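/- Along any solution of the closed-loop unicycle dynamics under the forward motion control, at every state (x, θ) with (cos θ, sin θ)·(g − x) ≥ 0, the squared perpendicular goal alignment distance d_g(x,θ)² = ((−sin θ, cos θ)·(g − x))² satisfies d/dt d_g² = −2 k_ω φ sin(φ) cos(φ) ‖g − x‖² ≤ 0, where φ = atan2((−sin θ, cos θ)·(g−x), (cos θ, sin θ)·(g−x)). -/

import Mathlib

open Real Metric Set
open scoped RealInnerProductSpace

noncomputable section

abbrev E2 := EuclideanSpace ℝ (Fin 2)

/-- Unit forward direction vector of orientation `θ`. -/
def uvec (θ : ℝ) : E2 := WithLp.toLp 2 ![Real.cos θ, Real.sin θ]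

/-- Unit normal (perpendicular) vector of orientation `θ`. -/
def nvec (θ : ℝ) : E2 := WithLp.toLp 2 ![-Real.sin θ, Real.cos θ]

/-- Two-argument arctangent, `atan2 y x`. -/
def atan2 (y x : ℝ) : ℝ := Complex.arg (x + y * Complex.I)

/-!
Write `a = ⟪uvec θ, g - x⟫` and `b = ⟪nvec θ, g - x⟫`. Moving along the heading does not change
`b`, so only the rotation contributes and `ḃ = -ω a`, whence `d/dt b² = -2 kω φ a b`. In polar
form `(a, b) = ‖g - x‖ (cos φ, sin φ)`, so `a b = sin φ cos φ ‖g - x‖²`. The sign follows from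
`φ sin φ ≥ 0` for `|φ| ≤ π` and `cos φ ≥ 0` for `a ≥ 0`, i.e. `|φ| ≤ π / 2`.
-/

theorem inner_uvec (θ : ℝ) (w : E2) : ⟪uvec θ, w⟫ = cos θ * w 0 + sin θ * w 1 := by
  simp [uvec, PiLp.inner_apply, Fin.sum_univ_two, mul_comm]

theorem inner_nvec (θ : ℝ) (w : E2) : ⟪nvec θ, w⟫ = -sin θ * w 0 + cos θ * w 1 := by
  simp [nvec, PiLp.inner_apply, Fin.sum_univ_two, mul_comm]

theorem inner_nvec_uvec (θ : ℝ) : ⟪nvec θ, uvec θ⟫ = 0 := by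
  rw [inner_nvec]; simp [uvec, mul_comm]

theorem inner_uvec_sq_add_inner_nvec_sq (θ : ℝ) (w : E2) :
    ⟪uvec θ, w⟫ ^ 2 + ⟪nvec θ, w⟫ ^ 2 = ‖w‖ ^ 2 := by
  rw [inner_uvec, inner_nvec, EuclideanSpace.norm_sq_eq, Fin.sum_univ_two]
  simp only [Real.norm_eq_abs, sq_abs]
  linear_combination (w 0 ^ 2 + w 1 ^ 2) * sin_sq_add_cos_sq θ

theorem nvec_eq_single (θ : ℝ) :
    nvec θ = (-sin θ) • EuclideanSpace.single 0 1 + cos θ • EuclideanSpace.single 1 1 := by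
  ext i; fin_cases i <;> simp [nvec]

theorem uvec_eq_single (θ : ℝ) :
    uvec θ = cos θ • EuclideanSpace.single 0 1 + sin θ • EuclideanSpace.single 1 1 := by
  ext i; fin_cases i <;> simp [uvec]

theorem HasDerivAt.nvec {θ : ℝ → ℝ} {ω t : ℝ} (hθ : HasDerivAt θ ω t) :
    HasDerivAt (fun s => nvec (θ s)) (-ω • uvec (θ t)) t := by
  simp only [nvec_eq_single]
  refine ((hθ.sin.neg).smul_const _).add (hθ.cos.smul_const _) |>.congr_deriv ?_
  rw [uvec_eq_single]; module

theorem sin_arg_mul_cos_arg_mul_norm_sq (z : ℂ) :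
    Real.sin (Complex.arg z) * Real.cos (Complex.arg z) * ‖z‖ ^ 2 = z.re * z.im := by
  rw [← Complex.norm_mul_cos_arg, ← Complex.norm_mul_sin_arg]; ring

theorem mul_sin_nonneg_of_abs_le_pi {φ : ℝ} (h : |φ| ≤ π) : 0 ≤ φ * sin φ := by
  rw [abs_le] at h
  rcases le_total 0 φ with hφ | hφ
  · exact mul_nonneg hφ (sin_nonneg_of_nonneg_of_le_pi hφ h.2)
  · exact mul_nonneg_of_nonpos_of_nonpos hφ (sin_nonpos_of_nonpos_of_neg_pi_le hφ h.1)

theorem sin_atan2_mul_cos_atan2 (y x : ℝ) :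
    sin (atan2 y x) * cos (atan2 y x) * (x ^ 2 + y ^ 2) = x * y := by
  have := sin_arg_mul_cos_arg_mul_norm_sq (x + y * Complex.I)
  rw [← Complex.normSq_eq_norm_sq, Complex.normSq_add_mul_I] at this
  simpa [atan2] using this

theorem atan2_mul_sin_atan2_nonneg (y x : ℝ) : 0 ≤ atan2 y x * sin (atan2 y x) :=
  mul_sin_nonneg_of_abs_le_pi (Complex.abs_arg_le_pi _)

theorem cos_atan2_nonneg (y : ℝ) {x : ℝ} (hx : 0 ≤ x) : 0 ≤ cos (atan2 y x) := by
  have h : |atan2 y x| ≤ π / 2 := Complex.abs_arg_le_pi_div_two_iff.2 (by simpa using hx)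
  exact cos_nonneg_of_neg_pi_div_two_le_of_le (abs_le.1 h).1 (abs_le.1 h).2

theorem hasDerivAt_inner_nvec_sub {θ : ℝ → ℝ} {x : ℝ → E2} {ω c t : ℝ} (g : E2)
    (hθ : HasDerivAt θ ω t) (hx : HasDerivAt x (c • uvec (θ t)) t) :
    HasDerivAt (fun s => ⟪nvec (θ s), g - x s⟫) (-ω * ⟪uvec (θ t), g - x t⟫) t := by
  refine (hθ.nvec.inner ℝ ((hasDerivAt_const t g).sub hx)).congr_deriv ?_
  simp [inner_smul_left, inner_smul_right, inner_nvec_uvec]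

theorem stmt_2_general (g : E2) (kω : ℝ) (hkω : 0 < kω)
    (x : ℝ → E2) (θ : ℝ → ℝ)
    (v : ℝ → ℝ)
    (ω : ℝ → ℝ)
    (hω : ω = fun s => kω * atan2 ⟪nvec (θ s), g - x s⟫ ⟪uvec (θ s), g - x s⟫)
    (φ : ℝ → ℝ)
    (hφ : φ = fun s => atan2 ⟪nvec (θ s), g - x s⟫ ⟪uvec (θ s), g - x s⟫)
    (hx : ∀ s, HasDerivAt x (v s • uvec (θ s)) s)
    (hθ : ∀ s, HasDerivAt θ (ω s) s) :
    ∀ t, 0 ≤ ⟪uvec (θ t), g - x t⟫ →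
      HasDerivAt (fun s => (⟪nvec (θ s), g - x s⟫ : ℝ) ^ 2)
        (-2 * kω * φ t * Real.sin (φ t) * Real.cos (φ t) * ‖g - x t‖ ^ 2) t ∧
      -2 * kω * φ t * Real.sin (φ t) * Real.cos (φ t) * ‖g - x t‖ ^ 2 ≤ 0 := by
  intro t ha
  have hωt : ω t = kω * φ t := by rw [hω, hφ]
  have hsin_cos : sin (φ t) * cos (φ t) * ‖g - x t‖ ^ 2
      = ⟪uvec (θ t), g - x t⟫ * ⟪nvec (θ t), g - x t⟫ := by
    rw [hφ, ← inner_uvec_sq_add_inner_nvec_sq]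
    exact sin_atan2_mul_cos_atan2 _ _
  have hφ_sin : 0 ≤ φ t * sin (φ t) := hφ ▸ atan2_mul_sin_atan2_nonneg _ _
  have hcos : 0 ≤ cos (φ t) := hφ ▸ cos_atan2_nonneg _ ha
  constructor
  · refine ((hasDerivAt_inner_nvec_sub g (hθ t) (hx t)).pow 2).congr_deriv ?_
    rw [hωt]
    linear_combination (2 * kω * φ t) * hsin_cos
  · have := mul_nonneg (mul_nonneg (mul_nonneg hkω.le hφ_sin) hcos) (sq_nonneg ‖g - x t‖)
    linarith

/-- Decrease of the squared perpendicular goal alignment distance at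
goal-aligned poses (Lemma: Perpendicular Goal Alignment Distance). -/
theorem stmt_2 (g : E2) (kv kω : ℝ) (hkv : 0 < kv) (hkω : 0 < kω)
    (x : ℝ → E2) (θ : ℝ → ℝ)
    (v : ℝ → ℝ) (hv : v = fun s => kv * max 0 ⟪uvec (θ s), g - x s⟫)
    (ω : ℝ → ℝ)
    (hω : ω = fun s => kω * atan2 ⟪nvec (θ s), g - x s⟫ ⟪uvec (θ s), g - x s⟫)
    (φ : ℝ → ℝ)
    (hφ : φ = fun s => atan2 ⟪nvec (θ s), g - x s⟫ ⟪uvec (θ s), g - x s⟫)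
    (hx : ∀ s, HasDerivAt x (v s • uvec (θ s)) s)
    (hθ : ∀ s, HasDerivAt θ (ω s) s) :
    ∀ t, 0 ≤ ⟪uvec (θ t), g - x t⟫ →
      HasDerivAt (fun s => (⟪nvec (θ s), g - x s⟫ : ℝ) ^ 2)
        (-2 * kω * φ t * Real.sin (φ t) * Real.cos (φ t) * ‖g - x t‖ ^ 2) t ∧
      -2 * kω * φ t * Real.sin (φ t) * Real.cos (φ t) * ‖g - x t‖ ^ 2 ≤ 0 :=
  stmt_2_general g kω hkω x θ v ω hω φ hφ hx hθ
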